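/- For Schwartz functions f, g on ℝ² and σ ∈ ℝ, the complex conjugate of f ⋆_σ g equals g* ⋆_{1−σ} f*. In particular, for the Moyal product (σ = 1/2), (f ⋆ g)* = g* ⋆ f*. -/

import Mathlib

/-!
Expanding the Fourier transform writes both `(f ⋆_σ g)*` and `g* ⋆_{1-σ} f*` as iterated
integrals over `ℝ² × ℝ²`. For `σ ∉ {0, 1}`, Fubini on the left, followed by the substitutions
`v = (z₁ - (1-σ)w₂, z₂ - σw₁)` on the left and `u = (z₁ - σw₂, z₂ - (1-σ)w₁)` on the right,
brings both to the same integral, each with Jacobian `|σ(1-σ)|⁻¹`. At `σ ∈ {0, 1}` these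
substitutions degenerate (and the left integral is no longer absolutely convergent); there the
identity follows by continuity in `σ`, since the Fourier transform of a Schwartz function is again
Schwartz and so dominates the integrand.
-/

open MeasureTheory Complex Real

/-- The `hbar`-normalized Fourier transform on the phase space `ℝ²`:
`Ff(ξ,η) = (1/(2πhbar)) ∬ f(x,p) e^{−(i/hbar)(ξx − ηp)} dx dp`. -/
noncomputable def FT (hbar : ℝ) (f : ℝ × ℝ → ℂ) : ℝ × ℝ → ℂ := fun w =>
  (1 / (2 * π * hbar) : ℂ) *
    ∫ z : ℝ × ℝ, f z * Complex.exp (-(Complex.I / hbar) * (w.1 * z.1 - w.2 * z.2))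

/-- The `σ`-star product on the phase space `ℝ²`, in its integral form:
`(f ⋆_σ g)(x,p) = (1/(2πhbar)) ∬ Ff(ξ,η) g(x − (1−σ)η, p − σξ) e^{(i/hbar)(ξx − ηp)} dξ dη`. -/
noncomputable def starProd (hbar σ : ℝ) (f g : ℝ × ℝ → ℂ) : ℝ × ℝ → ℂ := fun z =>
  (1 / (2 * π * hbar) : ℂ) *
    ∫ w : ℝ × ℝ, FT hbar f w * g (z.1 - (1 - σ) * w.2, z.2 - σ * w.1) *
      Complex.exp ((Complex.I / hbar) * (w.1 * z.1 - w.2 * z.2))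

noncomputable def phase (r : ℝ) : ℂ := Complex.exp (r * I)

theorem norm_phase (r : ℝ) : ‖phase r‖ = 1 := Complex.norm_exp_ofReal_mul_I r

theorem conj_phase (r : ℝ) : (starRingEnd ℂ) (phase r) = phase (-r) := by
  rw [phase, ← Complex.exp_conj, map_mul, Complex.conj_ofReal, Complex.conj_I, phase]
  push_cast
  ring_nf

@[fun_prop]
theorem continuous_phase : Continuous phase := by
  unfold phase
  fun_prop

theorem measurePreserving_sub_mul (a k : ℝ) (hk : k ≠ 0) :
    MeasurePreserving (fun t : ℝ => a - k * t) volume (ENNReal.ofReal |k|⁻¹ • volume) := by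
  refine ⟨by fun_prop, ?_⟩
  have : (fun t : ℝ => a - k * t) = (fun t => a + t) ∘ (fun t => -k * t) := by
    funext t
    simp [sub_eq_add_neg]
  rw [this, ← Measure.map_map (by fun_prop) (by fun_prop),
    Real.map_volume_mul_left (neg_ne_zero.2 hk), Measure.map_smul,
    (measurePreserving_add_left volume a).map_eq, abs_inv, abs_neg]

/-- `w ↦ (a - k w₂, b - l w₁)`. -/
noncomputable def affineSwap (a b k l : ℝ) (hk : k ≠ 0) (hl : l ≠ 0) : ℝ × ℝ ≃ᵐ ℝ × ℝ :=
  MeasurableEquiv.prodComm.trans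
    (MeasurableEquiv.prodCongr ((MeasurableEquiv.mulLeft₀ k hk).trans (MeasurableEquiv.subLeft a))
      ((MeasurableEquiv.mulLeft₀ l hl).trans (MeasurableEquiv.subLeft b)))

theorem measurePreserving_affineSwap (a b k l : ℝ) (hk : k ≠ 0) (hl : l ≠ 0) :
    MeasurePreserving (affineSwap a b k l hk hl) volume (ENNReal.ofReal |k * l|⁻¹ • volume) := by
  have h := ((measurePreserving_sub_mul a k hk).prod (measurePreserving_sub_mul b l hl)).comp
    (Measure.measurePreserving_swap (μ := (volume : Measure ℝ)) (ν := volume))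
  rwa [Measure.prod_smul_left, Measure.prod_smul_right, smul_smul,
    ← ENNReal.ofReal_mul (by positivity), ← mul_inv, ← abs_mul] at h

theorem integral_comp_affineSwap {E : Type*} [NormedAddCommGroup E] [NormedSpace ℝ E]
    (F : ℝ × ℝ → E) (a b k l : ℝ) (hk : k ≠ 0) (hl : l ≠ 0) :
    ∫ w : ℝ × ℝ, F (a - k * w.2, b - l * w.1) = |k * l|⁻¹ • ∫ v, F v := by
  have h := (measurePreserving_affineSwap a b k l hk hl).integral_comp' F
  rwa [integral_smul_measure, ENNReal.toReal_ofReal (by positivity)] at h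

theorem integrable_comp_affineSwap {E : Type*} [NormedAddCommGroup E] {F : ℝ × ℝ → E}
    (hF : Integrable F) (a b k l : ℝ) (hk : k ≠ 0) (hl : l ≠ 0) :
    Integrable fun w : ℝ × ℝ => F (a - k * w.2, b - l * w.1) :=
  ((measurePreserving_affineSwap a b k l hk hl).integrable_comp_emb
    (affineSwap a b k l hk hl).measurableEmbedding).2 (hF.smul_measure ENNReal.ofReal_ne_top)

open FourierTransform in
theorem exists_schwartzMap_eq_FT {hbar : ℝ} (hh : hbar ≠ 0) (f : SchwartzMap (ℝ × ℝ) ℂ) :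
    ∃ Φ : SchwartzMap (ℝ × ℝ) ℂ, FT hbar f = Φ := by
  have h2πh : (2 * π * hbar)⁻¹ ≠ 0 := by simp [hh, Real.pi_ne_zero]
  -- `FT` is Mathlib's transform on `ℂ ≅ ℝ²` evaluated at the frequency `(w₁ - i w₂) / (2πħ)`
  let ξ : (ℝ × ℝ) ≃L[ℝ] ℂ := (Complex.equivRealProdCLM.symm.trans Complex.conjCLE).trans
    (LinearEquiv.smulOfNeZero ℝ ℂ _ h2πh).toContinuousLinearEquiv
  refine ⟨(1 / (2 * π * hbar) : ℂ) • SchwartzMap.compCLMOfContinuousLinearEquiv ℂ ξ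
    (𝓕 (SchwartzMap.compCLMOfContinuousLinearEquiv ℂ Complex.equivRealProdCLM f)), ?_⟩
  ext w
  simp only [FT, smul_apply, SchwartzMap.compCLMOfContinuousLinearEquiv_apply,
    Function.comp_apply, SchwartzMap.fourier_coe, Real.fourier_eq, smul_eq_mul]
  congr 1
  rw [← Complex.volume_preserving_equiv_real_prod.integral_comp']
  refine integral_congr_ae (ae_of_all _ fun v => ?_)
  have hinner : inner ℝ v (ξ w) = (w.1 * v.re - w.2 * v.im) / (2 * π * hbar) := by
    simp [ξ, Complex.inner]
    ring
  dsimp only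
  rw [Circle.smul_def, Real.fourierChar_apply, hinner, smul_eq_mul, mul_comm,
    Complex.measurableEquivRealProd_apply]
  congr 2
  push_cast
  field_simp

theorem starProd_eq_integral_integral (hbar σ : ℝ) (f g : ℝ × ℝ → ℂ) (z : ℝ × ℝ) :
    starProd hbar σ f g z = (1 / (2 * π * hbar) : ℂ) * ((1 / (2 * π * hbar) : ℂ) *
      ∫ w : ℝ × ℝ, ∫ u : ℝ × ℝ, f u * g (z.1 - (1 - σ) * w.2, z.2 - σ * w.1) *
        phase ((w.1 * z.1 - w.2 * z.2 - (w.1 * u.1 - w.2 * u.2)) / hbar)) := by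
  unfold starProd FT
  congr 1
  rw [← integral_const_mul]
  refine integral_congr_ae (ae_of_all _ fun w => ?_)
  dsimp only
  rw [mul_assoc, mul_assoc, ← integral_mul_const]
  congr 1
  refine integral_congr_ae (ae_of_all _ fun u => ?_)
  dsimp only
  rw [phase, show (((w.1 * z.1 - w.2 * z.2 - (w.1 * u.1 - w.2 * u.2)) / hbar : ℝ) : ℂ) * I
      = I / hbar * (w.1 * z.1 - w.2 * z.2) + -(I / hbar) * (w.1 * u.1 - w.2 * u.2) by
    push_cast
    ring, Complex.exp_add]
  ring

theorem conj_starProd_eq_integral_integral (hbar σ : ℝ) (f g : ℝ × ℝ → ℂ) (z : ℝ × ℝ) :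
    (starRingEnd ℂ) (starProd hbar σ f g z) = (1 / (2 * π * hbar) : ℂ) *
      ((1 / (2 * π * hbar) : ℂ) * ∫ w : ℝ × ℝ, ∫ u : ℝ × ℝ,
        (starRingEnd ℂ) (f u) * (starRingEnd ℂ) (g (z.1 - (1 - σ) * w.2, z.2 - σ * w.1)) *
          phase ((w.1 * u.1 - w.2 * u.2 - (w.1 * z.1 - w.2 * z.2)) / hbar)) := by
  have hc : (starRingEnd ℂ) (1 / (2 * π * hbar) : ℂ) = 1 / (2 * π * hbar) := by
    simp [Complex.conj_ofReal, map_ofNat]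
  rw [starProd_eq_integral_integral, map_mul, map_mul, hc, ← integral_conj]
  congr 2
  refine integral_congr_ae (ae_of_all _ fun w => ?_)
  dsimp only
  rw [← integral_conj]
  refine integral_congr_ae (ae_of_all _ fun u => ?_)
  simp only [map_mul, conj_phase, ← neg_div, neg_sub]

theorem integral_integral_swap_roles {a b : ℝ × ℝ → ℂ} (ha : Integrable a) (hb : Integrable b)
    (hbar : ℝ) {σ : ℝ} (hσ₀ : σ ≠ 0) (hσ₁ : σ ≠ 1) (z : ℝ × ℝ) :
    ∫ w : ℝ × ℝ, ∫ u : ℝ × ℝ, a u * b (z.1 - (1 - σ) * w.2, z.2 - σ * w.1) *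
        phase ((w.1 * u.1 - w.2 * u.2 - (w.1 * z.1 - w.2 * z.2)) / hbar) =
      ∫ w : ℝ × ℝ, ∫ u : ℝ × ℝ, b u * a (z.1 - σ * w.2, z.2 - (1 - σ) * w.1) *
        phase ((w.1 * z.1 - w.2 * z.2 - (w.1 * u.1 - w.2 * u.2)) / hbar) := by
  have hσ₁' : 1 - σ ≠ 0 := sub_ne_zero.2 hσ₁.symm
  set K : ℝ × ℝ → ℂ := fun u => ∫ v : ℝ × ℝ, a u * b v *
    phase (((z.2 - v.2) * (u.1 - z.1) / σ - (z.1 - v.1) * (u.2 - z.2) / (1 - σ)) / hbar)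
  have hφ : Integrable fun w : ℝ × ℝ => b (z.1 - (1 - σ) * w.2, z.2 - σ * w.1) :=
    integrable_comp_affineSwap hb _ _ _ _ hσ₁' hσ₀
  have hint : Integrable (Function.uncurry fun (w u : ℝ × ℝ) =>
      a u * b (z.1 - (1 - σ) * w.2, z.2 - σ * w.1) *
        phase ((w.1 * u.1 - w.2 * u.2 - (w.1 * z.1 - w.2 * z.2)) / hbar))
      ((volume : Measure (ℝ × ℝ)).prod volume) := by
    have hP : Continuous fun p : (ℝ × ℝ) × (ℝ × ℝ) =>
        phase ((p.1.1 * p.2.1 - p.1.2 * p.2.2 - (p.1.1 * z.1 - p.1.2 * z.2)) / hbar) := by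
      fun_prop
    refine ((hφ.mul_prod ha).mul_bdd hP.aestronglyMeasurable
      (ae_of_all _ fun p => (norm_phase _).le)).congr (ae_of_all _ fun p => ?_)
    simp only [Function.uncurry]
    ring
  calc _ = ∫ u : ℝ × ℝ, ∫ w : ℝ × ℝ, a u * b (z.1 - (1 - σ) * w.2, z.2 - σ * w.1) *
        phase ((w.1 * u.1 - w.2 * u.2 - (w.1 * z.1 - w.2 * z.2)) / hbar) :=
        integral_integral_swap hint
    _ = ∫ u : ℝ × ℝ, |(1 - σ) * σ|⁻¹ • K u := by
        refine integral_congr_ae (ae_of_all _ fun u => ?_)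
        dsimp only
        rw [← integral_comp_affineSwap _ _ _ _ _ hσ₁' hσ₀]
        refine integral_congr_ae (ae_of_all _ fun w => ?_)
        dsimp only
        congr 3
        field_simp
        ring
    _ = ∫ w : ℝ × ℝ, K (z.1 - σ * w.2, z.2 - (1 - σ) * w.1) := by
        rw [integral_smul, integral_comp_affineSwap _ _ _ _ _ hσ₀ hσ₁', mul_comm]
    _ = _ := by
        refine integral_congr_ae (ae_of_all _ fun w => ?_)
        refine integral_congr_ae (ae_of_all _ fun u => ?_)
        dsimp only
        rw [mul_comm (a _)]
        congr 3
        field_simp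
        ring

theorem conj_starProd_of_ne {f g : ℝ × ℝ → ℂ} (hf : Integrable f) (hg : Integrable g)
    (hbar : ℝ) {σ : ℝ} (hσ₀ : σ ≠ 0) (hσ₁ : σ ≠ 1) (z : ℝ × ℝ) :
    (starRingEnd ℂ) (starProd hbar σ f g z) =
      starProd hbar (1 - σ) (fun w => (starRingEnd ℂ) (g w)) (fun w => (starRingEnd ℂ) (f w)) z := by
  have hconj {φ : ℝ × ℝ → ℂ} (hφ : Integrable φ) : Integrable fun w => (starRingEnd ℂ) (φ w) :=
    Complex.conjCLE.toContinuousLinearMap.integrable_comp hφ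
  rw [conj_starProd_eq_integral_integral, starProd_eq_integral_integral, sub_sub_cancel,
    integral_integral_swap_roles (hconj hf) (hconj hg) hbar hσ₀ hσ₁ z]

theorem continuous_starProd_param (hbar : ℝ) {f g : ℝ × ℝ → ℂ} (hf : Integrable (FT hbar f))
    (hg : Continuous g) {C : ℝ} (hC : ∀ x, ‖g x‖ ≤ C) (z : ℝ × ℝ) :
    Continuous fun σ => starProd hbar σ f g z := by
  refine continuous_const.mul (continuous_of_dominated
    (bound := fun w => ‖FT hbar f w‖ * C) (fun σ => ?_) (fun σ => ae_of_all _ fun w => ?_)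
    (hf.norm.mul_const C) (ae_of_all _ fun w => by fun_prop))
  · exact (hf.aestronglyMeasurable.mul (hg.comp (by fun_prop)).aestronglyMeasurable).mul
      (by fun_prop : Continuous _).aestronglyMeasurable
  · rw [norm_mul, norm_mul, show ‖Complex.exp _‖ = 1 by simp [Complex.norm_exp], mul_one]
    gcongr
    exact hC _

theorem conj_starProd {hbar : ℝ} (hh : hbar ≠ 0) (σ : ℝ) (f g : SchwartzMap (ℝ × ℝ) ℂ)
    (z : ℝ × ℝ) :
    (starRingEnd ℂ) (starProd hbar σ f g z) = starProd hbar (1 - σ)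
      (fun w => (starRingEnd ℂ) (g w)) (fun w => (starRingEnd ℂ) (f w)) z := by
  let conjS := SchwartzMap.postcompCLM (E := ℝ × ℝ) (𝕜 := ℝ) Complex.conjCLE.toContinuousLinearMap
  obtain ⟨Φf, hΦf⟩ := exists_schwartzMap_eq_FT hh f
  obtain ⟨Φg, hΦg⟩ := exists_schwartzMap_eq_FT hh (conjS g)
  have hL : Continuous fun t => (starRingEnd ℂ) (starProd hbar t f g z) :=
    Complex.continuous_conj.comp <| continuous_starProd_param hbar (hΦf ▸ Φf.integrable)
      g.continuous (g.norm_le_seminorm ℂ) z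
  have hR : Continuous fun t => starProd hbar (1 - t)
      (fun w => (starRingEnd ℂ) (g w)) (fun w => (starRingEnd ℂ) (f w)) z :=
    (continuous_starProd_param hbar (hΦg ▸ Φg.integrable) (conjS f).continuous
      ((conjS f).norm_le_seminorm ℂ) z).comp (by fun_prop)
  have hdense : Dense ({0, 1} : Set ℝ)ᶜ := (Set.toFinite _).countable.dense_compl ℝ
  refine congrFun (hL.ext_on hdense hR fun t ht => ?_) σ
  simp only [Set.mem_compl_iff, Set.mem_insert_iff, Set.mem_singleton_iff, not_or] at ht
  exact conj_starProd_of_ne f.integrable g.integrable hbar ht.1 ht.2 z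

/-- `(f ⋆_σ g)* = g* ⋆_{1−σ} f*`; in particular for the Moyal product `(f ⋆ g)* = g* ⋆ f*`. -/
theorem stmt_4 (hbar σ : ℝ) (hh : 0 < hbar) (f g : SchwartzMap (ℝ × ℝ) ℂ) :
    (∀ z : ℝ × ℝ, (starRingEnd ℂ) (starProd hbar σ (⇑f) (⇑g) z) =
        starProd hbar (1 - σ) (fun w => (starRingEnd ℂ) (g w)) (fun w => (starRingEnd ℂ) (f w)) z) ∧
      (σ = 1/2 → ∀ z : ℝ × ℝ, (starRingEnd ℂ) (starProd hbar (1/2) (⇑f) (⇑g) z) =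
        starProd hbar (1/2) (fun w => (starRingEnd ℂ) (g w)) (fun w => (starRingEnd ℂ) (f w)) z) := by
  refine ⟨conj_starProd hh.ne' σ f g, fun _ z => ?_⟩
  rw [conj_starProd hh.ne', show (1 : ℝ) - 1 / 2 = 1 / 2 by norm_num]
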